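/- For β > 0 and x, y ∈ ℝ, |φ(x) − φ(y)| ≤ tanh(β)·|x − y|, where φ(x) = arctanh(tanh(β)·tanh(x)); i.e., φ is a tanh(β)-Lipschitz map, and hence for d·tanh(β) < 1 the map x ↦ h + d·φ(x) is a contraction with a unique, globally attracting fixed point for every h ∈ ℝ. -/

import Mathlib

/-- The inverse hyperbolic tangent, arctanh x = (1/2)·log((1+x)/(1-x)). -/
noncomputable def artanh (x : ℝ) : ℝ := (1 / 2) * Real.log ((1 + x) / (1 - x))

/-- The one-step Ising tree recursion function φ(x) = arctanh(tanh β · tanh x). -/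
noncomputable def phi (β x : ℝ) : ℝ := artanh (Real.tanh β * Real.tanh x)

/-!
With `t = tanh β` and `s = tanh x`, the chain rule gives `φ'(x) = t (1 - s²) / (1 - t² s²)`,
and `t² < 1` makes the denominator at least `1 - s²`, so `|φ'| ≤ |t|`. The mean value theorem
turns this into the Lipschitz bound, and for `d · tanh β < 1` the map `x ↦ h + d φ(x)` is a
contraction of `ℝ`, to which the Banach fixed point theorem applies.
-/

open Real (tanh sinh cosh)

theorem Real.tanh_pos {x : ℝ} (hx : 0 < x) : 0 < tanh x := by
  rw [Real.tanh_eq_sinh_div_cosh]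
  exact div_pos (Real.sinh_pos_iff.2 hx) (Real.cosh_pos x)

theorem Real.hasDerivAt_tanh (x : ℝ) : HasDerivAt tanh (1 - tanh x ^ 2) x := by
  have hcosh := (Real.cosh_pos x).ne'
  have hquot := (Real.hasDerivAt_sinh x).div (Real.hasDerivAt_cosh x) hcosh
  rw [show tanh = sinh / cosh from funext Real.tanh_eq_sinh_div_cosh]
  refine hquot.congr_deriv ?_
  rw [Pi.div_apply]
  field_simp

theorem hasDerivAt_artanh {x : ℝ} (hx : x ^ 2 < 1) : HasDerivAt artanh (1 - x ^ 2)⁻¹ x := by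
  have hpos : 0 < 1 + x := by nlinarith
  have hneg : 0 < 1 - x := by nlinarith
  have hquot := ((hasDerivAt_id x).const_add 1).div ((hasDerivAt_id x).const_sub 1) hneg.ne'
  refine ((hquot.log (div_pos hpos hneg).ne').const_mul (1 / 2 : ℝ)).congr_deriv ?_
  have hden : 1 - x ^ 2 ≠ 0 := by linarith
  simp only [id, Pi.div_apply]
  field_simp
  ring

theorem hasDerivAt_phi (β x : ℝ) :
    HasDerivAt (phi β) (tanh β * (1 - tanh x ^ 2) / (1 - (tanh β * tanh x) ^ 2)) x := by
  have hsq : (tanh β * tanh x) ^ 2 < 1 := by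
    rw [mul_pow]
    exact mul_lt_one_of_nonneg_of_lt_one_left (sq_nonneg _) (Real.tanh_sq_lt_one β)
      (Real.tanh_sq_lt_one x).le
  exact ((hasDerivAt_artanh hsq).comp x ((Real.hasDerivAt_tanh x).const_mul (tanh β))).congr_deriv
    (by ring)

theorem abs_mul_one_sub_sq_div_le {s t : ℝ} (hs : s ^ 2 < 1) (ht : t ^ 2 ≤ 1) :
    |t * (1 - s ^ 2) / (1 - (t * s) ^ 2)| ≤ |t| := by
  have hden : 1 - s ^ 2 ≤ 1 - (t * s) ^ 2 := by nlinarith [sq_nonneg s]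
  rw [abs_div, abs_mul, abs_of_pos (by linarith : 0 < 1 - s ^ 2),
    abs_of_pos (by linarith : 0 < 1 - (t * s) ^ 2), mul_div_assoc]
  exact mul_le_of_le_one_right (abs_nonneg t) ((div_le_one (by linarith)).2 hden)

theorem lipschitzWith_phi (β : ℝ) : LipschitzWith ‖tanh β‖₊ (phi β) :=
  lipschitzWith_of_nnnorm_deriv_le (fun x => (hasDerivAt_phi β x).differentiableAt) fun x => by
    rw [(hasDerivAt_phi β x).deriv, ← NNReal.coe_le_coe, coe_nnnorm, coe_nnnorm,
      Real.norm_eq_abs, Real.norm_eq_abs]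
    exact abs_mul_one_sub_sq_div_le (Real.tanh_sq_lt_one x) (Real.tanh_sq_lt_one β).le

theorem stmt_19 (β : ℝ) (hβ : 0 < β) :
    (∀ x y : ℝ, |phi β x - phi β y| ≤ Real.tanh β * |x - y|) ∧
    (∀ d h : ℝ, 0 < d → d * Real.tanh β < 1 →
      (∀ x y : ℝ, |(h + d * phi β x) - (h + d * phi β y)| ≤ d * Real.tanh β * |x - y|) ∧
      ∃ p : ℝ, h + d * phi β p = p ∧ (∀ q : ℝ, h + d * phi β q = q → q = p) ∧
        ∀ x0 : ℝ,
          Filter.Tendsto (fun n => (fun x => h + d * phi β x)^[n] x0) Filter.atTop (nhds p)) := by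
  have htanh : 0 < tanh β := Real.tanh_pos hβ
  have hphi (x y : ℝ) : |phi β x - phi β y| ≤ tanh β * |x - y| := by
    simpa [Real.dist_eq, abs_of_pos htanh] using (lipschitzWith_phi β).dist_le_mul x y
  refine ⟨hphi, fun d h hd hdt => ?_⟩
  set f : ℝ → ℝ := fun x => h + d * phi β x
  have hf (x y : ℝ) : |f x - f y| ≤ d * tanh β * |x - y| :=
    calc |f x - f y| = d * |phi β x - phi β y| := by
          rw [show f x - f y = d * (phi β x - phi β y) by ring, abs_mul, abs_of_pos hd]
      _ ≤ d * tanh β * |x - y| := by rw [mul_assoc]; gcongr; exact hphi x y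
  have hcontr : ContractingWith ⟨d * tanh β, by positivity⟩ f :=
    ⟨hdt, LipschitzWith.of_dist_le_mul hf⟩
  exact ⟨hf, hcontr.fixedPoint f, hcontr.fixedPoint_isFixedPt,
    fun q hq => hcontr.fixedPoint_unique hq, hcontr.tendsto_iterate_fixedPoint⟩
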